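/- arXiv:2509.25790 — 3 statements merged into one kernel-verified Lean document; each statement's English description precedes it below -/
import Mathlib

section
/- The unitary given by the circuit consisting of a controlled-controlled-Hadamard with controls qubit 1 = 1, qubit 2 = 0 and target qubit 3; then a controlled-controlled-Hadamard with controls qubit 3 = 1, qubit 1 = 0 and target qubit 2; then a controlled-controlled-Hadamard with controls qubit 2 = 1, qubit 3 = 0 and target qubit 1, maps the six states |+⟩|1⟩|0⟩, |0⟩|+⟩|1⟩, |1⟩|0⟩|+⟩, |−⟩|1⟩|0⟩, |0⟩|−⟩|1⟩, |1⟩|0⟩|−⟩ to the computational basis states |0⟩|1⟩|0⟩, |0⟩|0⟩|1⟩, |1⟩|0⟩|0⟩, |1⟩|1⟩|0⟩, |0⟩|1⟩|1⟩, |1⟩|0⟩|1⟩ respectively. -/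
open Matrix Complex

noncomputable section

abbrev Qb := Fin 2
abbrev Q3 := Qb × Qb × Qb

def ket0 : Qb → ℂ := fun i => if i = 0 then 1 else 0
def ket1 : Qb → ℂ := fun i => if i = 1 then 1 else 0
def ketP : Qb → ℂ := fun _ => (1 : ℂ) / (Real.sqrt 2 : ℂ)
def ketM : Qb → ℂ := fun i =>
  if i = 0 then (1 : ℂ) / (Real.sqrt 2 : ℂ) else -((1 : ℂ) / (Real.sqrt 2 : ℂ))

/-- Tensor product of three single-qubit vectors. -/
def tens3 (a b c : Qb → ℂ) : Q3 → ℂ := fun x => a x.1 * b x.2.1 * c x.2.2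

/-- Inner product ⟨v|w⟩ on (ℂ²)^⊗3. -/
def inner3 (v w : Q3 → ℂ) : ℂ := ∑ x : Q3, star (v x) * w x

def PX : Matrix Qb Qb ℂ := !![0, 1; 1, 0]
def PY : Matrix Qb Qb ℂ := !![0, -Complex.I; Complex.I, 0]
def PZ : Matrix Qb Qb ℂ := !![1, 0; 0, -1]

def PauliSet : Set (Matrix Qb Qb ℂ) := {1, PX, PY, PZ}

/-- Kronecker (tensor) product of three single-qubit matrices. -/
def kron3 (A B C : Matrix Qb Qb ℂ) : Matrix Q3 Q3 ℂ :=
  fun x y => A x.1 y.1 * B x.2.1 y.2.1 * C x.2.2 y.2.2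

/-- Membership in the 3-qubit Pauli group: a phase ±1, ±i times a tensor
product of single-qubit Paulis. -/
def IsPauli3 (P : Matrix Q3 Q3 ℂ) : Prop :=
  ∃ (c : ℂ) (A B C : Matrix Qb Qb ℂ),
    (c = 1 ∨ c = -1 ∨ c = Complex.I ∨ c = -Complex.I) ∧
    A ∈ PauliSet ∧ B ∈ PauliSet ∧ C ∈ PauliSet ∧ P = c • kron3 A B C

def X1op : Matrix Q3 Q3 ℂ := kron3 PX 1 1
def X2op : Matrix Q3 Q3 ℂ := kron3 1 PX 1
def X3op : Matrix Q3 Q3 ℂ := kron3 1 1 PX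
def Z1op : Matrix Q3 Q3 ℂ := kron3 PZ 1 1
def Z2op : Matrix Q3 Q3 ℂ := kron3 1 PZ 1
def Z3op : Matrix Q3 Q3 ℂ := kron3 1 1 PZ

/-- The six states of Eq. (1). -/
def psi : Fin 6 → Q3 → ℂ
  | 0 => tens3 ketP ket1 ket0
  | 1 => tens3 ket0 ketP ket1
  | 2 => tens3 ket1 ket0 ketP
  | 3 => tens3 ketM ket1 ket0
  | 4 => tens3 ket0 ketM ket1
  | 5 => tens3 ket1 ket0 ketM

/-- Hadamard gate. -/
def Hgate : Matrix Qb Qb ℂ :=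
  ((Real.sqrt 2 : ℂ))⁻¹ • !![1, 1; 1, -1]

/-- Controlled-controlled-Hadamard: controls on qubits 1 (value 1) and 2 (value 0),
Hadamard target on qubit 3. -/
def CCH_a : Matrix Q3 Q3 ℂ := fun x y =>
  if x.1 = y.1 ∧ x.2.1 = y.2.1 then
    (if x.1 = 1 ∧ x.2.1 = 0 then Hgate x.2.2 y.2.2
     else if x.2.2 = y.2.2 then 1 else 0)
  else 0

/-- Controls on qubits 3 (value 1) and 1 (value 0), Hadamard target on qubit 2. -/
def CCH_b : Matrix Q3 Q3 ℂ := fun x y =>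
  if x.2.2 = y.2.2 ∧ x.1 = y.1 then
    (if x.2.2 = 1 ∧ x.1 = 0 then Hgate x.2.1 y.2.1
     else if x.2.1 = y.2.1 then 1 else 0)
  else 0

/-- Controls on qubits 2 (value 1) and 3 (value 0), Hadamard target on qubit 1. -/
def CCH_c : Matrix Q3 Q3 ℂ := fun x y =>
  if x.2.1 = y.2.1 ∧ x.2.2 = y.2.2 then
    (if x.2.1 = 1 ∧ x.2.2 = 0 then Hgate x.1 y.1
     else if x.1 = y.1 then 1 else 0)
  else 0

/-- The full circuit: first CCH_a, then CCH_b, then CCH_c. -/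
def circuitU : Matrix Q3 Q3 ℂ := CCH_c * CCH_b * CCH_a

lemma sqrt2_sq : ((Real.sqrt 2 : ℂ)) * ((Real.sqrt 2 : ℂ)) = 2 := by
  norm_cast
  rw [← Real.sqrt_mul_self (by norm_num : (0:ℝ) ≤ 2)]
  norm_num

lemma Aid1 (a c : Qb → ℂ) : CCH_a.mulVec (tens3 a ket1 c) = tens3 a ket1 c := by
  funext x
  obtain ⟨a, b, c⟩ := x
  fin_cases a <;> fin_cases b <;> fin_cases c <;>
    simp [CCH_a, CCH_b, CCH_c, Matrix.mulVec, dotProduct, Fintype.sum_prod_type,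
      Fin.sum_univ_two, tens3, ket0, ket1, ketP, ketM, Hgate] <;>
    (try field_simp) <;> (try ring_nf) <;> (try simp [sq, sqrt2_sq]) <;> (try ring)

lemma Aid0 (b c : Qb → ℂ) : CCH_a.mulVec (tens3 ket0 b c) = tens3 ket0 b c := by
  funext x
  obtain ⟨a, b, c⟩ := x
  fin_cases a <;> fin_cases b <;> fin_cases c <;>
    simp [CCH_a, CCH_b, CCH_c, Matrix.mulVec, dotProduct, Fintype.sum_prod_type,
      Fin.sum_univ_two, tens3, ket0, ket1, ketP, ketM, Hgate] <;>
    (try field_simp) <;> (try ring_nf) <;> (try simp [sq, sqrt2_sq]) <;> (try ring)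

lemma HaP : CCH_a.mulVec (tens3 ket1 ket0 ketP) = tens3 ket1 ket0 ket0 := by
  funext x
  obtain ⟨a, b, c⟩ := x
  fin_cases a <;> fin_cases b <;> fin_cases c <;>
    simp [CCH_a, CCH_b, CCH_c, Matrix.mulVec, dotProduct, Fintype.sum_prod_type,
      Fin.sum_univ_two, tens3, ket0, ket1, ketP, ketM, Hgate] <;>
    (try field_simp) <;> (try ring_nf) <;> (try simp [sq, sqrt2_sq]) <;> (try ring)

lemma HaM : CCH_a.mulVec (tens3 ket1 ket0 ketM) = tens3 ket1 ket0 ket1 := by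
  funext x
  obtain ⟨a, b, c⟩ := x
  fin_cases a <;> fin_cases b <;> fin_cases c <;>
    simp [CCH_a, CCH_b, CCH_c, Matrix.mulVec, dotProduct, Fintype.sum_prod_type,
      Fin.sum_univ_two, tens3, ket0, ket1, ketP, ketM, Hgate] <;>
    (try field_simp) <;> (try ring_nf) <;> (try simp [sq, sqrt2_sq]) <;> (try ring)

lemma Bid3 (a b : Qb → ℂ) : CCH_b.mulVec (tens3 a b ket0) = tens3 a b ket0 := by
  funext x
  obtain ⟨a, b, c⟩ := x
  fin_cases a <;> fin_cases b <;> fin_cases c <;>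
    simp [CCH_a, CCH_b, CCH_c, Matrix.mulVec, dotProduct, Fintype.sum_prod_type,
      Fin.sum_univ_two, tens3, ket0, ket1, ketP, ketM, Hgate] <;>
    (try field_simp) <;> (try ring_nf) <;> (try simp [sq, sqrt2_sq]) <;> (try ring)

lemma Bid1 (b c : Qb → ℂ) : CCH_b.mulVec (tens3 ket1 b c) = tens3 ket1 b c := by
  funext x
  obtain ⟨a, b, c⟩ := x
  fin_cases a <;> fin_cases b <;> fin_cases c <;>
    simp [CCH_a, CCH_b, CCH_c, Matrix.mulVec, dotProduct, Fintype.sum_prod_type,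
      Fin.sum_univ_two, tens3, ket0, ket1, ketP, ketM, Hgate] <;>
    (try field_simp) <;> (try ring_nf) <;> (try simp [sq, sqrt2_sq]) <;> (try ring)

lemma HbP : CCH_b.mulVec (tens3 ket0 ketP ket1) = tens3 ket0 ket0 ket1 := by
  funext x
  obtain ⟨a, b, c⟩ := x
  fin_cases a <;> fin_cases b <;> fin_cases c <;>
    simp [CCH_a, CCH_b, CCH_c, Matrix.mulVec, dotProduct, Fintype.sum_prod_type,
      Fin.sum_univ_two, tens3, ket0, ket1, ketP, ketM, Hgate] <;>
    (try field_simp) <;> (try ring_nf) <;> (try simp [sq, sqrt2_sq]) <;> (try ring)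

lemma HbM : CCH_b.mulVec (tens3 ket0 ketM ket1) = tens3 ket0 ket1 ket1 := by
  funext x
  obtain ⟨a, b, c⟩ := x
  fin_cases a <;> fin_cases b <;> fin_cases c <;>
    simp [CCH_a, CCH_b, CCH_c, Matrix.mulVec, dotProduct, Fintype.sum_prod_type,
      Fin.sum_univ_two, tens3, ket0, ket1, ketP, ketM, Hgate] <;>
    (try field_simp) <;> (try ring_nf) <;> (try simp [sq, sqrt2_sq]) <;> (try ring)

lemma Cid2 (a c : Qb → ℂ) : CCH_c.mulVec (tens3 a ket0 c) = tens3 a ket0 c := by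
  funext x
  obtain ⟨a, b, c⟩ := x
  fin_cases a <;> fin_cases b <;> fin_cases c <;>
    simp [CCH_a, CCH_b, CCH_c, Matrix.mulVec, dotProduct, Fintype.sum_prod_type,
      Fin.sum_univ_two, tens3, ket0, ket1, ketP, ketM, Hgate] <;>
    (try field_simp) <;> (try ring_nf) <;> (try simp [sq, sqrt2_sq]) <;> (try ring)

lemma Cid3 (a b : Qb → ℂ) : CCH_c.mulVec (tens3 a b ket1) = tens3 a b ket1 := by
  funext x
  obtain ⟨a, b, c⟩ := x
  fin_cases a <;> fin_cases b <;> fin_cases c <;>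
    simp [CCH_a, CCH_b, CCH_c, Matrix.mulVec, dotProduct, Fintype.sum_prod_type,
      Fin.sum_univ_two, tens3, ket0, ket1, ketP, ketM, Hgate] <;>
    (try field_simp) <;> (try ring_nf) <;> (try simp [sq, sqrt2_sq]) <;> (try ring)

lemma HcP : CCH_c.mulVec (tens3 ketP ket1 ket0) = tens3 ket0 ket1 ket0 := by
  funext x
  obtain ⟨a, b, c⟩ := x
  fin_cases a <;> fin_cases b <;> fin_cases c <;>
    simp [CCH_a, CCH_b, CCH_c, Matrix.mulVec, dotProduct, Fintype.sum_prod_type,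
      Fin.sum_univ_two, tens3, ket0, ket1, ketP, ketM, Hgate] <;>
    (try field_simp) <;> (try ring_nf) <;> (try simp [sq, sqrt2_sq]) <;> (try ring)

lemma HcM : CCH_c.mulVec (tens3 ketM ket1 ket0) = tens3 ket1 ket1 ket0 := by
  funext x
  obtain ⟨a, b, c⟩ := x
  fin_cases a <;> fin_cases b <;> fin_cases c <;>
    simp [CCH_a, CCH_b, CCH_c, Matrix.mulVec, dotProduct, Fintype.sum_prod_type,
      Fin.sum_univ_two, tens3, ket0, ket1, ketP, ketM, Hgate] <;>
    (try field_simp) <;> (try ring_nf) <;> (try simp [sq, sqrt2_sq]) <;> (try ring)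

/-- the circuit of three controlled-controlled-Hadamard gates maps
the six states of Eq. (1) to the indicated computational basis states. -/
theorem stmt5 :
    circuitU.mulVec (tens3 ketP ket1 ket0) = tens3 ket0 ket1 ket0 ∧
    circuitU.mulVec (tens3 ket0 ketP ket1) = tens3 ket0 ket0 ket1 ∧
    circuitU.mulVec (tens3 ket1 ket0 ketP) = tens3 ket1 ket0 ket0 ∧
    circuitU.mulVec (tens3 ketM ket1 ket0) = tens3 ket1 ket1 ket0 ∧
    circuitU.mulVec (tens3 ket0 ketM ket1) = tens3 ket0 ket1 ket1 ∧
    circuitU.mulVec (tens3 ket1 ket0 ketM) = tens3 ket1 ket0 ket1 := by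
  have key : ∀ v : Q3 → ℂ, circuitU.mulVec v =
      CCH_c.mulVec (CCH_b.mulVec (CCH_a.mulVec v)) := by
    intro v
    rw [circuitU, ← Matrix.mulVec_mulVec, ← Matrix.mulVec_mulVec]
  refine ⟨?_, ?_, ?_, ?_, ?_, ?_⟩ <;> rw [key]
  · rw [Aid1, Bid3, HcP]
  · rw [Aid0, HbP, Cid2]
  · rw [HaP, Bid3, Cid2]
  · rw [Aid1, Bid3, HcM]
  · rw [Aid0, HbM, Cid3]
  · rw [HaM, Bid1, Cid3]
end
end

section
/- Let P be a Hermitian Pauli operator on n+ℓ qubits anticommuting with Z_{n+k} for some ancilla index k, and let U = (I+Z_{n+k})/2 + P·X_{n+k}·(I−Z_{n+k})/2. Then U is unitary. -/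
open Matrix Complex

noncomputable section

/-- The computational basis labels of an `m`-qubit register. -/
abbrev QReg (m : ℕ) := Fin m → Fin 2

/-- Tensor product over all qubits of single-qubit operators. -/
def prodPauli {m : ℕ} (Ps : Fin m → Matrix Qb Qb ℂ) :
    Matrix (QReg m) (QReg m) ℂ :=
  fun v w => ∏ i, Ps i (v i) (w i)

/-- Membership in the `m`-qubit Pauli group: a phase ±1, ±i times a tensor
product of single-qubit Paulis. -/
def IsPauliGen {m : ℕ} (P : Matrix (QReg m) (QReg m) ℂ) : Prop :=
  ∃ (c : ℂ) (Ps : Fin m → Matrix Qb Qb ℂ),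
    (c = 1 ∨ c = -1 ∨ c = Complex.I ∨ c = -Complex.I) ∧
    (∀ i, Ps i ∈ PauliSet) ∧ P = c • prodPauli Ps

/-- The single-qubit operator `A` acting on qubit `j` (identity elsewhere). -/
def singleOp {m : ℕ} (j : Fin m) (A : Matrix Qb Qb ℂ) :
    Matrix (QReg m) (QReg m) ℂ :=
  prodPauli (fun i => if i = j then A else 1)

/-- The state `|ψ⟩ ⊗ |0⟩^⊗ℓ` on `n + ℓ` qubits. -/
def embed (n ℓ : ℕ) (ψ : QReg n → ℂ) : QReg (n + ℓ) → ℂ :=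
  fun v => ψ (fun i => v (Fin.castAdd ℓ i)) *
    ∏ j : Fin ℓ, (if v (Fin.natAdd n j) = 0 then 1 else 0)

/-- Inner product ⟨v|w⟩. -/
def innerG {m : ℕ} (v w : QReg m → ℂ) : ℂ := ∑ x, star (v x) * w x

/-- The projector `Π_a^P = (I + (−1)^a P)/2` onto outcome `a` of measuring `P`. -/
def projP {m : ℕ} (P : Matrix (QReg m) (QReg m) ℂ) (a : Fin 2) :
    Matrix (QReg m) (QReg m) ℂ :=
  (2⁻¹ : ℂ) • (1 + ((-1 : ℂ) ^ (a : ℕ)) • P)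


lemma prodPauli_mul {m : ℕ} (Ps Qs : Fin m → Matrix Qb Qb ℂ) :
    prodPauli Ps * prodPauli Qs = prodPauli (fun i => Ps i * Qs i) := by
  ext v w
  simp only [prodPauli, Matrix.mul_apply]
  rw [show (∏ i, (∑ j, Ps i (v i) j * Qs i j (w i)))
      = ∑ x ∈ Fintype.piFinset (fun _ : Fin m => (Finset.univ : Finset Qb)),
        ∏ i, Ps i (v i) (x i) * Qs i (x i) (w i) from Finset.prod_univ_sum _ _]
  rw [Fintype.piFinset_univ]
  exact Finset.sum_congr rfl fun x _ => (Finset.prod_mul_distrib).symm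

lemma prodPauli_one {m : ℕ} :
    prodPauli (fun _ : Fin m => (1 : Matrix Qb Qb ℂ)) = 1 := by
  ext v w
  simp only [prodPauli, Matrix.one_apply, Finset.prod_boole]
  simp [funext_iff]

lemma singleOp_mul {m : ℕ} (j : Fin m) (A B : Matrix Qb Qb ℂ) :
    singleOp j A * singleOp j B = singleOp j (A * B) := by
  rw [singleOp, singleOp, prodPauli_mul]
  have h : (fun i => (if i = j then A else 1) * (if i = j then B else 1))
      = fun i => if i = j then A * B else 1 := by
    funext i; by_cases h : i = j <;> simp [h]
  rw [h, singleOp]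

lemma singleOp_one {m : ℕ} (j : Fin m) : singleOp j (1 : Matrix Qb Qb ℂ) = 1 := by
  rw [singleOp]
  simp only [ite_self]
  exact prodPauli_one

lemma singleOp_smul {m : ℕ} (j : Fin m) (c : ℂ) (A : Matrix Qb Qb ℂ) :
    singleOp j (c • A) = c • singleOp j A := by
  ext v w
  simp only [singleOp, prodPauli, Matrix.smul_apply, smul_eq_mul]
  have hprod : ∀ B : Matrix Qb Qb ℂ,
      ∏ i ∈ Finset.univ.erase j, (if i = j then B else 1) (v i) (w i)
      = ∏ i ∈ Finset.univ.erase j, (1 : Matrix Qb Qb ℂ) (v i) (w i) := fun B =>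
    Finset.prod_congr rfl fun i hi => by
      rw [if_neg (Finset.ne_of_mem_erase hi)]
  rw [← Finset.mul_prod_erase Finset.univ _ (Finset.mem_univ j),
    ← Finset.mul_prod_erase Finset.univ
      (fun i => (if i = j then A else 1) (v i) (w i)) (Finset.mem_univ j),
    hprod, hprod, if_pos rfl, if_pos rfl]
  simp [Matrix.smul_apply, smul_eq_mul, mul_assoc]

lemma singleOp_neg {m : ℕ} (j : Fin m) (A : Matrix Qb Qb ℂ) :
    singleOp j (-A) = -(singleOp j A) := by
  rw [← neg_one_smul ℂ A, singleOp_smul, neg_one_smul]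

lemma singleOp_conjTranspose {m : ℕ} (j : Fin m) (A : Matrix Qb Qb ℂ) :
    (singleOp j A)ᴴ = singleOp j Aᴴ := by
  ext v w
  simp only [singleOp, prodPauli, Matrix.conjTranspose_apply, star_prod]
  exact Finset.prod_congr rfl fun i _ => by
    by_cases h : i = j <;>
      simp [h, Matrix.conjTranspose_apply, Matrix.one_apply, apply_ite star,
        eq_comm]

lemma PZ_sq : PZ * PZ = 1 := by
  ext i j
  fin_cases i <;> fin_cases j <;>
    simp [PZ, Matrix.mul_apply, Fin.sum_univ_two, Matrix.one_apply]

lemma PX_sq : PX * PX = 1 := by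
  ext i j
  fin_cases i <;> fin_cases j <;>
    simp [PX, Matrix.mul_apply, Fin.sum_univ_two, Matrix.one_apply]

lemma PZ_mul_PX : PZ * PX = -(PX * PZ) := by
  ext i j
  fin_cases i <;> fin_cases j <;>
    simp [PX, PZ, Matrix.mul_apply, Fin.sum_univ_two]

lemma PZ_herm : PZᴴ = PZ := by
  ext i j
  fin_cases i <;> fin_cases j <;> simp [PZ, Matrix.conjTranspose_apply]

lemma PX_herm : PXᴴ = PX := by
  ext i j
  fin_cases i <;> fin_cases j <;> simp [PX, Matrix.conjTranspose_apply]

lemma unit_aux {A : Type*} [Ring A] [StarRing A] [Algebra ℂ A] [StarModule ℂ A]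
    (p z x : A) (hps : star p = p) (hp2 : p * p = 1)
    (hzs : star z = z) (hz2 : z * z = 1)
    (hxs : star x = x) (hx2 : x * x = 1)
    (hpz : p * z = -(z * p)) (hxz : x * z = -(z * x)) :
    (star ((2⁻¹ : ℂ) • (1 + z) + p * x * ((2⁻¹ : ℂ) • (1 - z)))) *
      ((2⁻¹ : ℂ) • (1 + z) + p * x * ((2⁻¹ : ℂ) • (1 - z))) = 1 ∧
    ((2⁻¹ : ℂ) • (1 + z) + p * x * ((2⁻¹ : ℂ) • (1 - z))) *
      star ((2⁻¹ : ℂ) • (1 + z) + p * x * ((2⁻¹ : ℂ) • (1 - z))) = 1 := by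
  have hzp : z * p = -(p * z) := by rw [hpz, neg_neg]
  have hzx : z * x = -(x * z) := by rw [hxz, neg_neg]
  have hu : ((2⁻¹ : ℂ) • (1 + z) + p * x * ((2⁻¹ : ℂ) • (1 - z)))
      = (2⁻¹ : ℂ) • ((1 + z) + p * x * (1 - z)) := by
    rw [mul_smul_comm, ← smul_add]
  have hustar : star ((2⁻¹ : ℂ) • (1 + z) + p * x * ((2⁻¹ : ℂ) • (1 - z)))
      = (2⁻¹ : ℂ) • ((1 + z) + (1 - z) * (x * p)) := by
    have h1 : star ((2⁻¹ : ℂ) • (1 + z) + p * x * ((2⁻¹ : ℂ) • (1 - z)))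
        = (2⁻¹ : ℂ) • (1 + z) + ((2⁻¹ : ℂ) • (1 - z)) * (x * p) := by
      simp [star_add, star_smul, StarMul.star_mul, star_sub, star_one, hps,
        hzs, hxs, mul_assoc]
    rw [h1, smul_mul_assoc, ← smul_add]
  have h_ab : (1 + z) * (1 - z) = 0 := by
    have h : (1 + z) * (1 - z) = 1 - z * z := by noncomm_ring
    rw [h, hz2, sub_self]
  have h_ba : (1 - z) * (1 + z) = 0 := by
    have h : (1 - z) * (1 + z) = 1 - z * z := by noncomm_ring
    rw [h, hz2, sub_self]
  have h_ap : (1 + z) * p = p * (1 - z) := by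
    have h1 : (1 + z) * p = p + z * p := by noncomm_ring
    have h2 : p * (1 - z) = p - p * z := by noncomm_ring
    rw [h1, h2, hzp]; abel
  have h_pa : p * (1 + z) = (1 - z) * p := by
    have h1 : p * (1 + z) = p + p * z := by noncomm_ring
    have h2 : (1 - z) * p = p - z * p := by noncomm_ring
    rw [h1, h2, hpz]; abel
  have h_bx : (1 - z) * x = x * (1 + z) := by
    have h1 : (1 - z) * x = x - z * x := by noncomm_ring
    have h2 : x * (1 + z) = x + x * z := by noncomm_ring
    rw [h1, h2, hxz]; abel
  have h_xb : x * (1 - z) = (1 + z) * x := by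
    have h1 : x * (1 - z) = x - x * z := by noncomm_ring
    have h2 : (1 + z) * x = x + z * x := by noncomm_ring
    rw [h1, h2, hzx]; abel
  have hsum4 : (1 + z) * (1 + z) + (1 - z) * (1 - z) = (4 : ℂ) • 1 := by
    have h4 : (1 + z) * (1 + z) + (1 - z) * (1 - z)
        = 1 + 1 + (z * z) + (z * z) := by noncomm_ring
    rw [h4, hz2, show (1 + 1 + 1 + 1 : A) = (4 : ℂ) • 1 by
      rw [Algebra.smul_def, mul_one, map_ofNat]; norm_num]
  have T2 : (1 + z) * (p * x * (1 - z)) = 0 := by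
    have h : (1 + z) * (p * x * (1 - z)) = ((1 + z) * p) * (x * (1 - z)) := by
      noncomm_ring
    rw [h, h_ap, h_xb]
    have h' : p * (1 - z) * ((1 + z) * x) = p * (((1 - z) * (1 + z)) * x) := by
      noncomm_ring
    rw [h', h_ba, zero_mul, mul_zero]
  have T3 : ((1 - z) * (x * p)) * (1 + z) = 0 := by
    have h : (1 - z) * (x * p) * (1 + z) = (1 - z) * x * (p * (1 + z)) := by
      noncomm_ring
    rw [h, h_pa, h_bx]
    have h' : x * (1 + z) * ((1 - z) * p) = x * (((1 + z) * (1 - z)) * p) := by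
      noncomm_ring
    rw [h', h_ab, zero_mul, mul_zero]
  have T4 : ((1 - z) * (x * p)) * (p * x * (1 - z)) = (1 - z) * (1 - z) := by
    have h : (1 - z) * (x * p) * (p * x * (1 - z))
        = (1 - z) * (x * ((p * p) * x)) * (1 - z) := by noncomm_ring
    rw [h, hp2, one_mul, hx2, mul_one]
  have S2 : (1 + z) * ((1 - z) * (x * p)) = 0 := by
    have h : (1 + z) * ((1 - z) * (x * p)) = ((1 + z) * (1 - z)) * (x * p) := by
      noncomm_ring
    rw [h, h_ab, zero_mul]
  have S3 : (p * x * (1 - z)) * (1 + z) = 0 := by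
    have h : p * x * (1 - z) * (1 + z) = p * x * ((1 - z) * (1 + z)) := by
      noncomm_ring
    rw [h, h_ba, mul_zero]
  have S4 : (p * x * (1 - z)) * ((1 - z) * (x * p)) = (1 - z) * (1 - z) :=
    calc p * x * (1 - z) * ((1 - z) * (x * p))
        = (p * (x * (1 - z))) * (((1 - z) * x) * p) := by noncomm_ring
      _ = (p * ((1 + z) * x)) * ((x * (1 + z)) * p) := by rw [h_xb, h_bx]
      _ = (p * (1 + z)) * ((x * x) * ((1 + z) * p)) := by noncomm_ring
      _ = ((1 - z) * p) * (1 * (p * (1 - z))) := by rw [hx2, h_pa, h_ap]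
      _ = (1 - z) * ((p * p) * (1 - z)) := by noncomm_ring
      _ = (1 - z) * (1 - z) := by rw [hp2, one_mul]
  have expand : ∀ a c d : A, (a + c) * (a + d) = a * a + a * d + (c * a + c * d) :=
    fun a c d => by noncomm_ring
  constructor
  · rw [hustar, hu, smul_mul_smul_comm]
    have key : ((1 + z) + (1 - z) * (x * p)) * ((1 + z) + p * x * (1 - z))
        = (4 : ℂ) • 1 := by
      rw [expand, T2, T3, T4, add_zero, zero_add, hsum4]
    rw [key, smul_smul]
    norm_num
  · rw [hustar, hu, smul_mul_smul_comm]
    have key : ((1 + z) + p * x * (1 - z)) * ((1 + z) + (1 - z) * (x * p))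
        = (4 : ℂ) • 1 := by
      rw [expand, S2, S3, S4, add_zero, zero_add, hsum4]
    rw [key, smul_smul]
    norm_num

/-- for a Hermitian Pauli `P` anticommuting with `Z_{n+k}`, the
operator `U = (I+Z_{n+k})/2 + P·X_{n+k}·(I−Z_{n+k})/2` is unitary. -/
theorem stmt8 (n ℓ : ℕ) (k : Fin ℓ) (P : Matrix (QReg (n + ℓ)) (QReg (n + ℓ)) ℂ)
    (hP : IsPauliGen P) (hHerm : P.IsHermitian) (hsq : P * P = 1)
    (hanti : P * singleOp (Fin.natAdd n k) PZ
      = -(singleOp (Fin.natAdd n k) PZ * P)) :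
    let Zk := singleOp (Fin.natAdd n k) PZ
    let Xk := singleOp (Fin.natAdd n k) PX
    let U := (2⁻¹ : ℂ) • ((1 : Matrix (QReg (n + ℓ)) (QReg (n + ℓ)) ℂ) + Zk)
      + P * Xk * ((2⁻¹ : ℂ) • ((1 : Matrix (QReg (n + ℓ)) (QReg (n + ℓ)) ℂ) - Zk))
    Uᴴ * U = 1 ∧ U * Uᴴ = 1 := by
  intro Zk Xk U
  have hZs : Zkᴴ = Zk := by
    show (singleOp (Fin.natAdd n k) PZ)ᴴ = _
    rw [singleOp_conjTranspose, PZ_herm]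
  have hXs : Xkᴴ = Xk := by
    show (singleOp (Fin.natAdd n k) PX)ᴴ = _
    rw [singleOp_conjTranspose, PX_herm]
  have hZ2 : Zk * Zk = 1 := by
    show singleOp (Fin.natAdd n k) PZ * singleOp (Fin.natAdd n k) PZ = 1
    rw [singleOp_mul, PZ_sq, singleOp_one]
  have hX2 : Xk * Xk = 1 := by
    show singleOp (Fin.natAdd n k) PX * singleOp (Fin.natAdd n k) PX = 1
    rw [singleOp_mul, PX_sq, singleOp_one]
  have hXZ : Xk * Zk = -(Zk * Xk) := by
    show singleOp (Fin.natAdd n k) PX * singleOp (Fin.natAdd n k) PZ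
      = -(singleOp (Fin.natAdd n k) PZ * singleOp (Fin.natAdd n k) PX)
    rw [singleOp_mul, singleOp_mul, PZ_mul_PX, singleOp_neg, neg_neg]
  have := unit_aux P Zk Xk
    (by rw [Matrix.star_eq_conjTranspose]; exact hHerm) hsq
    (by rw [Matrix.star_eq_conjTranspose]; exact hZs) hZ2
    (by rw [Matrix.star_eq_conjTranspose]; exact hXs) hX2
    hanti hXZ
  simpa [U, Matrix.star_eq_conjTranspose] using this
end
end

section
/- The channel ℰ(ρ) = Σ_{μ=1}^{6} Π_μ ρ Π_μ + Π₀ ρ Π₀, where Π_μ are rank-one projectors onto the six states |+⟩|1⟩|0⟩, |0⟩|+⟩|1⟩, |1⟩|0⟩|+⟩, |−⟩|1⟩|0⟩, |0⟩|−⟩|1⟩, |1⟩|0⟩|−⟩ and Π₀ = I − Σ_μ Π_μ, satisfies Π₀ = |000⟩⟨000| + |111⟩⟨111|, and ℰ is a completely positive trace-preserving map. -/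
open Matrix Complex
open scoped ComplexOrder

noncomputable section

/-- Rank-one projector |v⟩⟨v|. -/
def outer3 (v : Q3 → ℂ) : Matrix Q3 Q3 ℂ := fun i j => v i * star (v j)

/-- The projectors Π_μ = |ψ_μ⟩⟨ψ_μ| onto the six states. -/
def Pi6 (μ : Fin 6) : Matrix Q3 Q3 ℂ := outer3 (psi μ)

/-- The complementary projector Π₀ = I − Σ_μ Π_μ. -/
def Pi0 : Matrix Q3 Q3 ℂ := 1 - ∑ μ, Pi6 μ

/-- The channel ℰ(ρ) = Σ_μ Π_μ ρ Π_μ + Π₀ ρ Π₀. -/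
def chanE (ρ : Matrix Q3 Q3 ℂ) : Matrix Q3 Q3 ℂ :=
  (∑ μ, Pi6 μ * ρ * Pi6 μ) + Pi0 * ρ * Pi0


section Aux

lemma sqrt2_mul_self : ((Real.sqrt 2 : ℝ) : ℂ) * ((Real.sqrt 2 : ℝ) : ℂ) = 2 := by
  norm_cast; rw [Real.mul_self_sqrt]; norm_num

set_option maxHeartbeats 2000000 in
lemma pi0_eq : Pi0 = outer3 (tens3 ket0 ket0 ket0) + outer3 (tens3 ket1 ket1 ket1) := by
  have hs := sqrt2_mul_self
  ext ⟨a,b,c⟩ ⟨a',b',c'⟩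
  fin_cases a <;> fin_cases b <;> fin_cases c <;> fin_cases a' <;> fin_cases b' <;> fin_cases c' <;>
    simp [Pi0, Pi6, psi, outer3, tens3, ket0, ket1, ketP, ketM, Fin.sum_univ_six,
      Matrix.sub_apply, Matrix.one_apply, Matrix.sum_apply, Prod.ext_iff] <;>
    field_simp <;> ring_nf <;> simp [sq, hs]

set_option maxHeartbeats 1000000 in
lemma psi_norm (μ : Fin 6) : ∑ x : Q3, star (psi μ x) * psi μ x = 1 := by
  have hs := sqrt2_mul_self
  fin_cases μ <;>
    simp [psi, tens3, ket0, ket1, ketP, ketM, Fintype.sum_prod_type, Fin.sum_univ_two] <;>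
    field_simp <;> ring_nf <;> simp [sq, hs]

lemma outer_mul (v w : Q3 → ℂ) :
    outer3 v * outer3 w =
      Matrix.of fun i j => (∑ x : Q3, star (v x) * w x) * (v i * star (w j)) := by
  ext i j
  simp only [Matrix.mul_apply, outer3, Matrix.of_apply, Finset.sum_mul]
  exact Finset.sum_congr rfl fun x _ => by ring

lemma Pi6_sq (μ : Fin 6) : Pi6 μ * Pi6 μ = Pi6 μ := by
  rw [Pi6, outer_mul, psi_norm μ]
  ext i j; simp [outer3]

lemma e000_norm : ∑ x : Q3, star (tens3 ket0 ket0 ket0 x) * tens3 ket0 ket0 ket0 x = 1 := by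
  simp [tens3, ket0, Fintype.sum_prod_type, Fin.sum_univ_two]

lemma e111_norm : ∑ x : Q3, star (tens3 ket1 ket1 ket1 x) * tens3 ket1 ket1 ket1 x = 1 := by
  simp [tens3, ket1, Fintype.sum_prod_type, Fin.sum_univ_two]

lemma e01_inner : ∑ x : Q3, star (tens3 ket0 ket0 ket0 x) * tens3 ket1 ket1 ket1 x = 0 := by
  simp [tens3, ket0, ket1, Fintype.sum_prod_type, Fin.sum_univ_two]

lemma e10_inner : ∑ x : Q3, star (tens3 ket1 ket1 ket1 x) * tens3 ket0 ket0 ket0 x = 0 := by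
  simp [tens3, ket0, ket1, Fintype.sum_prod_type, Fin.sum_univ_two]

lemma Pi0_sq : Pi0 * Pi0 = Pi0 := by
  rw [pi0_eq, add_mul, mul_add, mul_add, outer_mul, outer_mul, outer_mul, outer_mul,
    e000_norm, e111_norm, e01_inner, e10_inner]
  ext i j
  simp [outer3, Matrix.add_apply]

lemma Pi6_herm (μ : Fin 6) : (Pi6 μ)ᴴ = Pi6 μ := by
  ext i j
  simp only [Pi6, outer3, Matrix.conjTranspose_apply, star_mul', star_star]
  ring

lemma Pi0_herm : Pi0ᴴ = Pi0 := by
  simp [Pi0, Matrix.conjTranspose_sub, Matrix.conjTranspose_one, Matrix.conjTranspose_sum,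
    Pi6_herm]

lemma sum_Pi_add_Pi0 : (∑ μ, Pi6 μ) + Pi0 = 1 := by
  rw [Pi0]; abel

lemma psd_add {n : Type*} [Fintype n] {A B : Matrix n n ℂ}
    (hA : A.PosSemidef) (hB : B.PosSemidef) : (A + B).PosSemidef := by
  exact hA.add hB

lemma psd_sum {n : Type*} [Fintype n] {ι : Type*} (s : Finset ι) (f : ι → Matrix n n ℂ)
    (h : ∀ i ∈ s, (f i).PosSemidef) : (∑ i ∈ s, f i).PosSemidef := by
  classical
  induction s using Finset.induction_on with
  | empty => simpa using (Matrix.PosSemidef.zero : (0 : Matrix n n ℂ).PosSemidef)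
  | insert a s hnotmem ih =>
    rw [Finset.sum_insert hnotmem]
    exact psd_add (h _ (Finset.mem_insert_self _ _))
      (ih fun i hi => h i (Finset.mem_insert_of_mem hi))

end Aux

/-- Π₀ = |000⟩⟨000| + |111⟩⟨111|; the Kraus operators of ℰ satisfy
the CPTP condition Σ K†K = I; ℰ is trace preserving; and ℰ (and all its
ampliations ℰ ⊗ id_d) preserve positive semidefiniteness, i.e. ℰ is completely
positive. -/
theorem stmt19 :
    Pi0 = outer3 (tens3 ket0 ket0 ket0) + outer3 (tens3 ket1 ket1 ket1) ∧
    (∑ μ, (Pi6 μ)ᴴ * Pi6 μ) + Pi0ᴴ * Pi0 = 1 ∧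
    (∀ ρ : Matrix Q3 Q3 ℂ, (chanE ρ).trace = ρ.trace) ∧
    (∀ (d : ℕ) (ρ : Matrix (Q3 × Fin d) (Q3 × Fin d) ℂ), ρ.PosSemidef →
      ((∑ μ, (Matrix.kroneckerMap (· * ·) (Pi6 μ) (1 : Matrix (Fin d) (Fin d) ℂ))
            * ρ * (Matrix.kroneckerMap (· * ·) (Pi6 μ) (1 : Matrix (Fin d) (Fin d) ℂ))ᴴ)
        + (Matrix.kroneckerMap (· * ·) Pi0 (1 : Matrix (Fin d) (Fin d) ℂ))
            * ρ * (Matrix.kroneckerMap (· * ·) Pi0 (1 : Matrix (Fin d) (Fin d) ℂ))ᴴ).PosSemidef) := by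
  refine ⟨pi0_eq, ?_, ?_, ?_⟩
  · have h2 : ∑ μ, (Pi6 μ)ᴴ * Pi6 μ = ∑ μ, Pi6 μ :=
      Finset.sum_congr rfl fun μ _ => by rw [Pi6_herm, Pi6_sq]
    rw [h2, Pi0_herm, Pi0_sq, sum_Pi_add_Pi0]
  · intro ρ
    have t1 : ∀ μ : Fin 6, (Pi6 μ * ρ * Pi6 μ).trace = (Pi6 μ * ρ).trace := fun μ => by
      rw [Matrix.trace_mul_cycle, Pi6_sq]
    have t0 : (Pi0 * ρ * Pi0).trace = (Pi0 * ρ).trace := by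
      rw [Matrix.trace_mul_cycle, Pi0_sq]
    rw [chanE, Matrix.trace_add, Matrix.trace_sum]
    simp_rw [t1, t0]
    rw [← Matrix.trace_sum, ← Matrix.trace_add, ← Finset.sum_mul, ← add_mul,
      sum_Pi_add_Pi0, one_mul]
  · intro d ρ hρ
    refine psd_add (psd_sum _ _ fun μ _ => ?_) ?_ <;>
      exact hρ.mul_mul_conjTranspose_same _
end
end
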